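/- Let n ≥ 2, let U ⊆ ℂ^n be open, let U' ⊆ ℂ^{n−1} be a connected open set containing the image of U under the projection onto the first n−1 coordinates, and let F be a nonconstant holomorphic function on U'. Define f : U → ℂ by f(z₁,…,z_n) = F(z₁,…,z_{n−1}) and W' = {z ∈ U : f(z) ≠ 0 and z_n = exp(1/f(z))}. Then for every point w ∈ U with f(w) = 0 and every open neighborhood V ⊆ U of w, there is no set S ⊆ V, closed in V, such that W' ∩ V ⊆ S and every point of S has an open neighborhood V'' ⊆ V with S ∩ V'' = G^{-1}(0) for some holomorphic function G : V'' → ℂ whose derivative is nonzero at every point of V''; in other words, W' ∩ V cannot be contained in a closed (n−1)-dimensional complex submanifold of V, so W' cannot be extended as a complex manifold through any neighborhood of a zero of f. -/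

import Mathlib

open Complex Set

noncomputable section

abbrev Cn (n : ℕ) : Type := Fin n → ℂ

/-- `f` is holomorphic on `V` : complex Fréchet differentiable at each point of `V`. -/
def HoloOn {n : ℕ} {F : Type} [NormedAddCommGroup F] [NormedSpace ℂ F]
    (f : Cn n → F) (V : Set (Cn n)) : Prop :=
  ∀ z ∈ V, DifferentiableAt ℂ f z

/-- Multiplication by `i` as an `ℝ`-linear map on `ℂⁿ`. -/
def mulI (n : ℕ) : Cn n →ₗ[ℝ] Cn n where
  toFun v := Complex.I • v
  map_add' v w := smul_add _ v w
  map_smul' c v := smul_comm Complex.I c v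

/-- The Levi form of `ρ` is positive on nonzero vectors, at every point of `N`. -/
def LeviPositive {n : ℕ} (ρ : Cn n → ℝ) (N : Set (Cn n)) : Prop :=
  ∀ z ∈ N, ∀ v : Cn n, v ≠ 0 →
    0 < (1/4 : ℝ) * (iteratedFDeriv ℝ 2 ρ z ![v, v]
      + iteratedFDeriv ℝ 2 ρ z ![Complex.I • v, Complex.I • v])

/-- Strongly pseudoconvex domain with smooth boundary (boundedness stated separately). -/
def IsSPSCDomain (n : ℕ) (Ω : Set (Cn n)) : Prop :=
  IsOpen Ω ∧ IsConnected Ω ∧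
  ∃ (N : Set (Cn n)) (ρ : Cn n → ℝ), IsOpen N ∧ frontier Ω ⊆ N ∧
    ContDiffOn ℝ (⊤ : ℕ∞) ρ N ∧ Ω ∩ N = {z ∈ N | ρ z < 0} ∧
    (∀ z ∈ frontier Ω, fderiv ℝ ρ z ≠ 0) ∧ LeviPositive ρ N

/-- The hull of `K` w.r.t. functions holomorphic on neighborhoods of `closure Ω`. -/
def hullIn (n : ℕ) (Ω K : Set (Cn n)) : Set (Cn n) :=
  {z ∈ closure Ω | ∀ V : Set (Cn n), IsOpen V → closure Ω ⊆ V →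
    ∀ f : Cn n → ℂ, HoloOn f V → ‖f z‖ ≤ ⨆ w ∈ K, ‖f w‖}

/-- `A` is a relatively open subset of `S`. -/
def RelOpenIn {n : ℕ} (S A : Set (Cn n)) : Prop :=
  ∃ U : Set (Cn n), IsOpen U ∧ A = U ∩ S

/-- The boundary of `A` inside `S` (for `A` relatively open in `S`). -/
def bdryIn {n : ℕ} (S A : Set (Cn n)) : Set (Cn n) := (closure A ∩ S) \ A

/-- `φ` is a local defining map for `M` near `p`. -/
def IsLocalDefiningMap {n k : ℕ} (M : Set (Cn n)) (p : Cn n)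
    (V : Set (Cn n)) (φ : Cn n → Fin k → ℝ) : Prop :=
  IsOpen V ∧ p ∈ V ∧ ContDiffOn ℝ (⊤ : ℕ∞) φ V ∧
    (∀ z ∈ V, Function.Surjective (fderiv ℝ φ z)) ∧
    M ∩ V = {z ∈ V | φ z = 0}

/-- The tangent space `ker Dφ(p)` as an `ℝ`-subspace of `ℂⁿ`. -/
def tangentAt {n k : ℕ} (φ : Cn n → Fin k → ℝ) (p : Cn n) : Submodule ℝ (Cn n) :=
  LinearMap.ker ((fderiv ℝ φ p : Cn n →L[ℝ] (Fin k → ℝ)) : Cn n →ₗ[ℝ] (Fin k → ℝ))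

/-- `M` is a maximally complex `(2m+1)`-dimensional closed real submanifold of `A`. -/
def IsMaxCplxSubmanifold (n m : ℕ) (A M : Set (Cn n)) : Prop :=
  M ⊆ A ∧ closure M ∩ A ⊆ M ∧
  ∀ p ∈ M, ∃ (V : Set (Cn n)) (φ : Cn n → Fin (2*n - (2*m+1)) → ℝ),
    IsLocalDefiningMap M p V φ ∧
    Module.finrank ℝ
      ↥(tangentAt φ p ⊓ Submodule.map (mulI n) (tangentAt φ p)) = 2*m

/-- The level set of `f` through `p` meets `M` transversally at `p`:
`ker Df(p) + T_pM = ℂⁿ` as real vector spaces. -/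
def TransversalAt (n m : ℕ) (M : Set (Cn n)) (f : Cn n → ℂ) (p : Cn n) : Prop :=
  ∀ (V : Set (Cn n)) (φ : Cn n → Fin (2*n - (2*m+1)) → ℝ),
    IsLocalDefiningMap M p V φ →
    LinearMap.ker (((fderiv ℂ f p).restrictScalars ℝ : Cn n →L[ℝ] ℂ) : Cn n →ₗ[ℝ] ℂ) ⊔ tangentAt φ p = ⊤

/-- `p` is a regular point of the `k`-dimensional variety `W`. -/
def IsVarietyRegularPoint (n k : ℕ) (W : Set (Cn n)) (p : Cn n) : Prop :=
  ∃ (V : Set (Cn n)) (F : Cn n → Fin (n - k) → ℂ), IsOpen V ∧ p ∈ V ∧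
    HoloOn F V ∧ (∀ z ∈ V, Function.Surjective (fderiv ℂ F z)) ∧
    W ∩ V = {z ∈ V | F z = 0}

/-- `W` is a `k`-dimensional complex variety in the open set `G`. -/
def IsComplexVariety (n k : ℕ) (G W : Set (Cn n)) : Prop :=
  W ⊆ G ∧ closure W ∩ G ⊆ W ∧
  (∀ p ∈ W, ∃ (V : Set (Cn n)) (ι : Type) (g : ι → Cn n → ℂ),
    IsOpen V ∧ p ∈ V ∧ V ⊆ G ∧ (∀ i, HoloOn (g i) V) ∧
    W ∩ V = {z ∈ V | ∀ i, g i z = 0}) ∧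
  W ⊆ closure {p ∈ W | IsVarietyRegularPoint n k W p}

/-- The singular set of `W` is closed and discrete in `G`. -/
def HasIsolatedSingularities (n k : ℕ) (G W : Set (Cn n)) : Prop :=
  closure {p ∈ W | ¬ IsVarietyRegularPoint n k W p} ∩ G
      ⊆ {p ∈ W | ¬ IsVarietyRegularPoint n k W p} ∧
  ∀ p ∈ W, ¬ IsVarietyRegularPoint n k W p →
    ∃ V : Set (Cn n), IsOpen V ∧ p ∈ V ∧
      {q ∈ W | ¬ IsVarietyRegularPoint n k W q} ∩ V = {p}

/-!
Near a zero `w'` of `F`, on any complex line through `w'` on which `F` does not vanish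
identically, `F` is an open map, so `1 / F` takes all large values and `exp (1 / F)` takes every
value `t ≠ 0` arbitrarily close to `w'`. Hence the closure of `W'` contains all of `{F = 0} × ℂ`
near `w`, and a hypersurface `S = {G = 0}` containing it contains `w`. On each complex line
through `(w', τ)`, `τ ≠ 0`, inside the hyperplane `z_n = τ`, the zeros of `G` accumulate at
`(w', τ)`, so `G` vanishes on that line; letting the lines and `τ` vary, `G` vanishes near `w`,
contradicting `dG(w) ≠ 0`.
-/

open Filter Topology Metric AffineMap

section General

variable {E : Type*} [NormedAddCommGroup E] [NormedSpace ℂ E]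

theorem frequently_exp_inv_eq {t : ℂ} (ht : t ≠ 0) :
    ∃ᶠ u in 𝓝[≠] (0 : ℂ), cexp (1 / u) = t := by
  set c : ℕ → ℂ := fun k => log t + k * (2 * Real.pi * I)
  have hc : Tendsto c atTop (Bornology.cobounded ℂ) := by
    have him : Tendsto (fun k => (c k).im) atTop atTop := by
      simpa [c] using tendsto_atTop_add_const_left _ _
        (tendsto_natCast_atTop_atTop.atTop_mul_const Real.two_pi_pos)
    rw [← tendsto_norm_atTop_iff_cobounded]
    exact tendsto_atTop_mono (fun k => (le_abs_self _).trans (abs_im_le_norm (c k))) him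
  refine (tendsto_inv₀_cobounded'.comp hc).frequently
    (Eventually.frequently (Eventually.of_forall fun k => ?_))
  simp [c, exp_add, exp_log ht, exp_nat_mul_two_pi_mul_I]

theorem AnalyticAt.frequently_exp_inv_eq {g : E → ℂ} {z₀ : E} {t : ℂ}
    (hg : AnalyticAt ℂ g z₀) (hg₀ : g z₀ = 0) (hne : ¬ ∀ᶠ z in 𝓝 z₀, g z = 0) (ht : t ≠ 0) :
    ∃ᶠ z in 𝓝 z₀, g z ≠ 0 ∧ cexp (1 / g z) = t := by
  rcases hg.eventually_constant_or_nhds_le_map_nhds with hconst | hopen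
  · exact absurd (by simpa only [hg₀] using hconst) hne
  · rw [hg₀] at hopen
    have := (frequently_nhdsWithin_iff.1 (_root_.frequently_exp_inv_eq ht)).filter_mono hopen
    exact (frequently_map.1 this).mono fun z ⟨hexp, hz⟩ => ⟨hz, hexp⟩

theorem AnalyticAt.frequently_eq_zero_or_exp_inv_eq {g : ℂ → ℂ} {z₀ t : ℂ}
    (hg : AnalyticAt ℂ g z₀) (hg₀ : g z₀ = 0) (ht : t ≠ 0) :
    ∃ᶠ z in 𝓝[≠] z₀, g z = 0 ∨ cexp (1 / g z) = t := by
  by_cases hne : ∀ᶠ z in 𝓝 z₀, g z = 0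
  · exact (eventually_nhdsWithin_of_eventually_nhds hne).frequently.mono fun _ => Or.inl
  · refine frequently_nhdsWithin_iff.2 ((hg.frequently_exp_inv_eq hg₀ hne ht).mono ?_)
    rintro z ⟨hz, hexp⟩
    exact ⟨Or.inr hexp, fun hzz₀ => hz (by rwa [mem_singleton_iff.1 hzz₀])⟩

theorem AnalyticOnNhd.eqOn_zero_of_eq_zero_or_exp_inv_eq {h g : ℂ → ℂ} {D : Set ℂ} {z₀ t : ℂ}
    (hh : AnalyticOnNhd ℂ h D) (hD : IsPreconnected D) (hDz₀ : D ∈ 𝓝 z₀)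
    (hg : AnalyticAt ℂ g z₀) (hg₀ : g z₀ = 0) (ht : t ≠ 0)
    (hvanish : ∀ z ∈ D, (g z = 0 ∨ cexp (1 / g z) = t) → h z = 0) : EqOn h 0 D :=
  hh.eqOn_zero_of_preconnected_of_frequently_eq_zero hD (mem_of_mem_nhds hDz₀)
    (((hg.frequently_eq_zero_or_exp_inv_eq hg₀ ht).and_eventually
      (mem_nhdsWithin_of_mem_nhds hDz₀)).mono fun z ⟨hz, hzD⟩ => hvanish z hzD hz)

theorem convex_lineMap_preimage {s : Set E} (hs : Convex ℝ s) (a b : E) :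
    Convex ℝ ((lineMap a b : ℂ → E) ⁻¹' s) := by
  intro x hx y hy θ φ hθ hφ hθφ
  convert hs hx hy hθ hφ hθφ using 1
  simp only [mem_preimage, lineMap_apply_module']
  rw [smul_add, smul_add, add_add_add_comm, ← add_smul, hθφ, one_smul, add_smul, smul_assoc,
    smul_assoc]

variable {F : Type*} [NormedAddCommGroup F] [NormedSpace ℂ F] [CompleteSpace F]

/- Mathlib knows analyticity of holomorphic functions only in one variable, so the
several-variable statements below are reduced to complex lines. -/

theorem DifferentiableOn.analyticOnNhd_comp_lineMap {f : E → F} {s : Set E}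
    (hf : DifferentiableOn ℂ f s) (hs : IsOpen s) (a b : E) :
    AnalyticOnNhd ℂ (f ∘ lineMap a b) ((lineMap a b : ℂ → E) ⁻¹' s) :=
  (hf.comp (fun _ _ => hasDerivAt_lineMap.differentiableAt.differentiableWithinAt)
    (mapsTo_preimage _ _)).analyticOnNhd (hs.preimage lineMap_continuous)

theorem DifferentiableOn.eqOn_zero_of_convex_of_eventuallyEq_zero {f : E → F} {s : Set E}
    {a : E} (hf : DifferentiableOn ℂ f s) (hs : IsOpen s) (hconv : Convex ℝ s) (ha : a ∈ s)
    (hfa : f =ᶠ[𝓝 a] 0) : EqOn f 0 s := by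
  intro b hb
  have hline :=
    (hf.analyticOnNhd_comp_lineMap hs a b).eqOn_zero_of_preconnected_of_eventuallyEq_zero
    (convex_lineMap_preimage hconv a b).isPreconnected (z₀ := 0) (by simpa using ha)
    ((lineMap_continuous.tendsto' 0 a (by simp)).eventually hfa)
  simpa using hline (show (1 : ℂ) ∈ _ by simpa using hb)

theorem DifferentiableOn.eqOn_zero_of_isPreconnected_of_eventuallyEq_zero {f : E → F}
    {U : Set E} {a : E} (hf : DifferentiableOn ℂ f U) (hU : IsOpen U) (hpc : IsPreconnected U)
    (ha : a ∈ U) (hfa : f =ᶠ[𝓝 a] 0) : EqOn f 0 U := by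
  suffices hsub : U ⊆ {z | f =ᶠ[𝓝 z] 0} from fun z hz => (hsub hz).self_of_nhds
  refine hpc.subset_of_closure_inter_subset isOpen_setOfPred_eventually_nhds ⟨a, ha, hfa⟩ ?_
  rintro z ⟨hzu, hzU⟩
  obtain ⟨r, hr, hball⟩ := isOpen_iff.1 hU z hzU
  obtain ⟨b, hb, hbu⟩ := mem_closure_iff_nhds.1 hzu _ (ball_mem_nhds z hr)
  exact eventually_of_mem (ball_mem_nhds z hr)
    ((hf.mono hball).eqOn_zero_of_convex_of_eventuallyEq_zero isOpen_ball (convex_ball z r) hb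
      hbu)

theorem DifferentiableOn.frequently_exp_inv_eq {f : E → ℂ} {s : Set E} {z : E} {t : ℂ}
    (hf : DifferentiableOn ℂ f s) (hs : s ∈ 𝓝 z) (hz : f z = 0) (hne : ¬ ∀ᶠ y in 𝓝 z, f y = 0)
    (ht : t ≠ 0) : ∃ᶠ y in 𝓝 z, f y ≠ 0 ∧ cexp (1 / f y) = t := by
  obtain ⟨r, hr, hball⟩ := Metric.mem_nhds_iff.1 hs
  obtain ⟨a, ha, hfa⟩ : ∃ a ∈ ball z r, f a ≠ 0 := by
    by_contra! h
    exact hne (eventually_of_mem (ball_mem_nhds z hr) h)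
  have hg := (hf.mono hball).analyticOnNhd_comp_lineMap isOpen_ball z a
  have hD₀ : (0 : ℂ) ∈ (lineMap z a : ℂ → E) ⁻¹' ball z r := by
    simpa using (mem_ball_self hr : z ∈ ball z r)
  have hgne : ¬ ∀ᶠ l in 𝓝 (0 : ℂ), (f ∘ lineMap z a) l = 0 := fun hev => hfa <| by
    simpa using hg.eqOn_zero_of_preconnected_of_eventuallyEq_zero
      (convex_lineMap_preimage (convex_ball z r) z a).isPreconnected hD₀ hev
      (show (1 : ℂ) ∈ _ by simpa using ha)
  exact (lineMap_continuous.tendsto' 0 z (by simp)).frequently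
    ((hg 0 hD₀).frequently_exp_inv_eq (by simpa using hz) hgne ht)

end General

def expInvGraph {n : ℕ} (F : Cn n → ℂ) : Set (Cn (n+1)) :=
  {p | F (Fin.init p) ≠ 0 ∧ p (Fin.last n) = cexp (1 / F (Fin.init p))}

theorem mem_closure_expInvGraph {n : ℕ} {F : Cn n → ℂ} {s : Set (Cn n)} {p : Cn (n+1)}
    (hF : DifferentiableOn ℂ F s) (hs : s ∈ 𝓝 (Fin.init p))
    (hne : ¬ ∀ᶠ y in 𝓝 (Fin.init p), F y = 0)
    (hp : F (Fin.init p) = 0 ∨ p (Fin.last n) = cexp (1 / F (Fin.init p))) :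
    p ∈ closure (expInvGraph F) := by
  by_cases h₀ : F (Fin.init p) ≠ 0
  · exact subset_closure ⟨h₀, hp.resolve_left h₀⟩
  push Not at h₀
  have hvert : ∀ t : ℂ, t ≠ 0 →
      (Fin.snoc (Fin.init p) t : Cn (n+1)) ∈ closure (expInvGraph F) := by
    intro t ht
    have hcont : Continuous fun y : Cn n => (Fin.snoc y t : Cn (n+1)) :=
      continuous_id.finSnoc (A := fun _ => ℂ) continuous_const
    refine mem_closure_iff_frequently.2 ((hcont.tendsto _).frequently
      ((hF.frequently_exp_inv_eq hs h₀ hne ht).mono fun y ⟨hy, hyt⟩ => ?_))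
    simpa [expInvGraph, hy] using hyt.symm
  rw [← Fin.snoc_init_self p, ← closure_closure (s := expInvGraph F)]
  exact map_mem_closure (continuous_const.finSnoc (A := fun _ => ℂ) continuous_id)
    (dense_compl_singleton (0 : ℂ) _) fun t ht => hvert t ht

theorem eventuallyEq_zero_of_eq_zero_or_last_eq_exp_inv {n : ℕ} {F : Cn n → ℂ}
    {G : Cn (n+1) → ℂ} {s : Set (Cn n)} {w : Cn (n+1)} {ρ : ℝ} (hρ : 0 < ρ)
    (hF : DifferentiableOn ℂ F s) (hs : s ∈ 𝓝 (Fin.init w)) (hFw : F (Fin.init w) = 0)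
    (hG : DifferentiableOn ℂ G (ball w ρ))
    (hvanish : ∀ p ∈ ball w ρ,
      (F (Fin.init p) = 0 ∨ p (Fin.last n) = cexp (1 / F (Fin.init p))) → G p = 0) :
    G =ᶠ[𝓝 w] 0 := by
  have hG_of_last_ne_zero : ∀ p ∈ ball w ρ, p (Fin.last n) ≠ 0 → G p = 0 := by
    intro p hp hτ
    set q := Function.update w (Fin.last n) (p (Fin.last n))
    have hq : q ∈ ball w ρ := by
      rw [mem_ball, dist_pi_lt_iff hρ]
      intro i
      rcases eq_or_ne i (Fin.last n) with rfl | hi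
      · simpa [q] using (dist_le_pi_dist p w _).trans_lt hp
      · simpa [q, hi] using hρ
    have hlast : ∀ l : ℂ, lineMap q p l (Fin.last n) = p (Fin.last n) := by
      simp [lineMap_apply_module', q]
    have hinit : Differentiable ℂ (Fin.init : Cn (n+1) → Cn n) :=
      differentiable_pi.2 fun i => differentiable_apply i.castSucc
    have hφ : Differentiable ℂ fun l : ℂ => Fin.init (lineMap q p l : Cn (n+1)) :=
      hinit.comp fun _ => hasDerivAt_lineMap.differentiableAt
    have hg : AnalyticAt ℂ (fun l : ℂ => F (Fin.init (lineMap q p l))) 0 :=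
      (hF.comp hφ.differentiableOn (mapsTo_preimage _ s)).analyticAt
        (hφ.continuous.tendsto' 0 _ (by simp [q, Fin.init_update_last]) hs)
    have hD : (lineMap q p : ℂ → _) ⁻¹' ball w ρ ∈ 𝓝 (0 : ℂ) :=
      (isOpen_ball.preimage lineMap_continuous).mem_nhds (by simpa using hq)
    have hline :=
      (hG.analyticOnNhd_comp_lineMap isOpen_ball q p).eqOn_zero_of_eq_zero_or_exp_inv_eq
      (convex_lineMap_preimage (convex_ball w ρ) q p).isPreconnected hD hg
      (by simpa [q, Fin.init_update_last] using hFw) hτ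
      (fun l hl hor => hvanish _ hl (by rw [hlast]; exact hor.imp_right Eq.symm))
    simpa using hline (show (1 : ℂ) ∈ _ by simpa using hp)
  have hdense : Dense {p : Cn (n+1) | p (Fin.last n) ≠ 0} :=
    (dense_compl_singleton 0).preimage (isOpenMap_eval _)
  exact eventually_of_mem (ball_mem_nhds w hρ)
    (EqOn.of_subset_closure (fun p hp => hG_of_last_ne_zero p hp.1 hp.2) hG.continuousOn
      continuousOn_const inter_subset_left (hdense.open_subset_closure_inter isOpen_ball))

theorem graph_does_not_extend_general (n : ℕ)
    (U : Set (Cn (n+1)))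
    (U' : Set (Cn n)) (hU' : IsOpen U') (hU'conn : IsConnected U')
    (hproj : (fun z : Cn (n+1) => fun i : Fin n => z i.castSucc) '' U ⊆ U')
    (F : Cn n → ℂ) (hF : HoloOn F U')
    (hFnc : ¬ ∃ c : ℂ, ∀ z ∈ U', F z = c)
    (W' : Set (Cn (n+1)))
    (hW' : W' = {z ∈ U | F (fun i => z i.castSucc) ≠ 0 ∧
      z (Fin.last n) = Complex.exp (1 / F (fun i => z i.castSucc))})
    (w : Cn (n+1)) (hfw : F (fun i => w i.castSucc) = 0)
    (V : Set (Cn (n+1))) (hV : IsOpen V) (hwV : w ∈ V) (hVU : V ⊆ U) :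
    ¬ ∃ S : Set (Cn (n+1)), S ⊆ V ∧ closure S ∩ V ⊆ S ∧ W' ∩ V ⊆ S ∧
      ∀ p ∈ S, ∃ (V'' : Set (Cn (n+1))) (G : Cn (n+1) → ℂ),
        IsOpen V'' ∧ p ∈ V'' ∧ V'' ⊆ V ∧ HoloOn G V'' ∧
        (∀ z ∈ V'', fderiv ℂ G z ≠ 0) ∧
        S ∩ V'' = {z ∈ V'' | G z = 0} := by
  rintro ⟨S, -, hSclosed, hW'S, hSloc⟩
  have hFU' : DifferentiableOn ℂ F U' := fun z hz => (hF z hz).differentiableWithinAt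
  have hinit : ∀ p ∈ V, Fin.init p ∈ U' := fun p hp => hproj ⟨p, hVU hp, rfl⟩
  have hFne : ∀ z ∈ U', ¬ ∀ᶠ y in 𝓝 z, F y = 0 := fun z hz hev =>
    hFnc ⟨0, hFU'.eqOn_zero_of_isPreconnected_of_eventuallyEq_zero hU' hU'conn.isPreconnected
      hz hev⟩
  have hgraph : V ∩ expInvGraph F ⊆ S := fun q ⟨hqV, hq⟩ => hW'S ⟨hW' ▸ ⟨hVU hqV, hq⟩, hqV⟩
  have hclosure : closure (expInvGraph F) ∩ V ⊆ S := fun p ⟨hpc, hpV⟩ =>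
    hSclosed ⟨closure_mono hgraph (hV.inter_closure ⟨hpV, hpc⟩), hpV⟩
  have hsub : ∀ p ∈ V,
      (F (Fin.init p) = 0 ∨ p (Fin.last n) = cexp (1 / F (Fin.init p))) → p ∈ S :=
    fun p hpV hp => hclosure ⟨mem_closure_expInvGraph hFU' (hU'.mem_nhds (hinit p hpV))
      (hFne _ (hinit p hpV)) hp, hpV⟩
  obtain ⟨V'', G, hV''o, hwV'', hV''V, hG, hG', hSG⟩ := hSloc w (hsub w hwV (Or.inl hfw))
  obtain ⟨ρ, hρ, hball⟩ := isOpen_iff.1 hV''o w hwV''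
  have hGw : G =ᶠ[𝓝 w] 0 := eventuallyEq_zero_of_eq_zero_or_last_eq_exp_inv hρ hFU'
    (hU'.mem_nhds (hinit w hwV)) hfw (fun z hz => (hG z (hball hz)).differentiableWithinAt)
    fun p hp hor =>
      (hSG ▸ ⟨hsub p (hV''V (hball hp)) hor, hball hp⟩ : p ∈ {z ∈ V'' | G z = 0}).2
  exact hG' w hwV'' (by rw [hGw.fderiv_eq]; exact fderiv_const_apply _)

/-- The graph `W' = {f ≠ 0, z_{n+1} = exp(1/f)}` cannot be extended as
a closed complex hypersurface-submanifold through any neighborhood of a zero of `f`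
(from Example 4.1 of the paper). -/
theorem graph_does_not_extend (n : ℕ) (hn : 1 ≤ n)
    (U : Set (Cn (n+1))) (hU : IsOpen U)
    (U' : Set (Cn n)) (hU' : IsOpen U') (hU'conn : IsConnected U')
    (hproj : (fun z : Cn (n+1) => fun i : Fin n => z i.castSucc) '' U ⊆ U')
    (F : Cn n → ℂ) (hF : HoloOn F U')
    (hFnc : ¬ ∃ c : ℂ, ∀ z ∈ U', F z = c)
    (W' : Set (Cn (n+1)))
    (hW' : W' = {z ∈ U | F (fun i => z i.castSucc) ≠ 0 ∧
      z (Fin.last n) = Complex.exp (1 / F (fun i => z i.castSucc))})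
    (w : Cn (n+1)) (hw : w ∈ U) (hfw : F (fun i => w i.castSucc) = 0)
    (V : Set (Cn (n+1))) (hV : IsOpen V) (hwV : w ∈ V) (hVU : V ⊆ U) :
    ¬ ∃ S : Set (Cn (n+1)), S ⊆ V ∧ closure S ∩ V ⊆ S ∧ W' ∩ V ⊆ S ∧
      ∀ p ∈ S, ∃ (V'' : Set (Cn (n+1))) (G : Cn (n+1) → ℂ),
        IsOpen V'' ∧ p ∈ V'' ∧ V'' ⊆ V ∧ HoloOn G V'' ∧
        (∀ z ∈ V'', fderiv ℂ G z ≠ 0) ∧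
        S ∩ V'' = {z ∈ V'' | G z = 0} :=
  graph_does_not_extend_general n U U' hU' hU'conn hproj F hF hFnc W' hW' w hfw V hV hwV hVU
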